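/- Assume θ_max‖θ‖₁L ≥ log(n+L). Then with probability at least 1 − 1/(n+L), max_{1≤i≤n} Σ_{l=1}^L Σ_{j=1}^n A_l(i,j) ≤ C·θ_max‖θ‖₁L, where one may take C = 1 + (2 + 2√10)/3; equivalently, ‖Σ_{l=1}^L D_l‖ ≤ C·θ_max‖θ‖₁L, where D_l is the diagonal degree matrix of A_l. -/

import Mathlib

open Matrix MeasureTheory ProbabilityTheory
open scoped BigOperators ENNReal

noncomputable section

/-- Euclidean norm of a finite real vector. -/
def vecNorm {m : ℕ} (v : Fin m → ℝ) : ℝ := Real.sqrt (∑ i, v i ^ 2)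

/-- Frobenius norm of a real matrix. -/
def frobNorm {m p : ℕ} (M : Matrix (Fin m) (Fin p) ℝ) : ℝ :=
  Real.sqrt (∑ i, ∑ j, M i j ^ 2)

/-- Spectral norm (ℓ² operator norm) of a real matrix. -/
def specNorm {m p : ℕ} (M : Matrix (Fin m) (Fin p) ℝ) : ℝ :=
  sSup ((fun x => vecNorm (M.mulVec x)) '' {x : Fin p → ℝ | vecNorm x ≤ 1})

open Classical in
/-- The k-th largest (1-indexed) eigenvalue in magnitude of a real symmetric matrix
(`0` if the matrix is not Hermitian). -/
def kthAbsEig {m : ℕ} (M : Matrix (Fin m) (Fin m) ℝ) (k : ℕ) : ℝ :=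
  if hM : M.IsHermitian then
    (((Finset.univ : Finset (Fin m)).val.map fun i => |hM.eigenvalues i|).sort (· ≤ ·)).getD
      (m - k) 0
  else 0

/-- `Z` is a community membership matrix: 0/1 entries, exactly one 1 per row,
every column nonzero. -/
def IsMembership {n K : ℕ} (Z : Matrix (Fin n) (Fin K) ℝ) : Prop :=
  (∀ i k, Z i k = 0 ∨ Z i k = 1) ∧ (∀ i, ∑ k, Z i k = 1) ∧ (∀ k, ∃ i, Z i k = 1)

/-- The MLDCSBM model hypotheses on the parameters `Z`, `θ`, `B`. -/
def MLDCSBM {n L K : ℕ} (Z : Matrix (Fin n) (Fin K) ℝ) (θ : Fin n → ℝ)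
    (B : Fin L → Matrix (Fin K) (Fin K) ℝ) : Prop :=
  IsMembership Z ∧ (∀ i, 0 < θ i ∧ θ i ≤ 1) ∧
    (∀ l, (B l).IsSymm ∧ ∀ a b, 0 ≤ B l a b ∧ B l a b ≤ 1)

/-- Ω_l = Θ Z B_l Zᵀ Θ. -/
def OmegaL {n K : ℕ} (θ : Fin n → ℝ) (Z : Matrix (Fin n) (Fin K) ℝ)
    (Bl : Matrix (Fin K) (Fin K) ℝ) : Matrix (Fin n) (Fin n) ℝ :=
  Matrix.diagonal θ * Z * Bl * Zᵀ * Matrix.diagonal θ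

def thetaMin {n : ℕ} (θ : Fin n → ℝ) : ℝ := sInf (Set.range θ)
def thetaMax {n : ℕ} (θ : Fin n → ℝ) : ℝ := sSup (Set.range θ)

/-- Minimum community size. -/
def nMin {n K : ℕ} (Z : Matrix (Fin n) (Fin K) ℝ) : ℝ :=
  sInf (Set.range fun k : Fin K => ∑ i, Z i k)

/-- Maximum community size. -/
def nMax {n K : ℕ} (Z : Matrix (Fin n) (Fin K) ℝ) : ℝ :=
  sSup (Set.range fun k : Fin K => ∑ i, Z i k)

/-- Column `k` of a matrix, as a vector. -/
def colVec {n K : ℕ} (U : Matrix (Fin n) (Fin K) ℝ) (k : Fin K) : Fin n → ℝ := fun i => U i k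

/-- Row-normalized version of a matrix: each row divided by its Euclidean norm. -/
def rowNormalize {n K : ℕ} (U : Matrix (Fin n) (Fin K) ℝ) : Matrix (Fin n) (Fin K) ℝ :=
  fun i k => U i k / vecNorm (fun j => U i j)

/-- Diagonal degree matrix of a square matrix. -/
def degDiag {n : ℕ} (M : Matrix (Fin n) (Fin n) ℝ) : Matrix (Fin n) (Fin n) ℝ :=
  Matrix.diagonal fun i => ∑ j, M i j


/-!
Fix a node `i`. By symmetry its degree `∑_l ∑_j A_l(i,j)` is a sum of the independent Bernoulli
upper-triangle entries `A_l(min i j, max i j)`, whose means `Ω_l(i,j) ≤ θ(i) θ(j)` add up to at most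
`M = θ_max ‖θ‖₁ L`. The Chernoff bound at `t = log 4` gives
`P(degree ≥ c M) ≤ exp(-c M log 4 + 3 M) ≤ exp(-2 M)`, because `c log 4 ≥ 5` for
`c = 1 + (2 + 2√10)/3`; this `c` is where Bernstein's bound `exp(-s² / (2(M + s/3)))` at
`s = (c-1) M` reaches `exp(-2 M)`. A union bound over the `n` nodes and `M ≥ log (n + L)` leave
a failure probability of at most `n / (n + L)² ≤ 1 / (n + L)`.
-/

section Chernoff

variable {Ω ι : Type*} [MeasurableSpace Ω] {P : Measure Ω} [IsProbabilityMeasure P]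

lemma mgf_of_zero_one {X : Ω → ℝ} (hX : Measurable X) (h01 : ∀ ω, X ω = 0 ∨ X ω = 1) {p : ℝ}
    (hp : 0 ≤ p) (hb : P {ω | X ω = 1} = ENNReal.ofReal p) (t : ℝ) :
    mgf X P t = 1 + (Real.exp t - 1) * p := by
  set E := {ω | X ω = 1}
  have hE : MeasurableSet E := hX (measurableSet_singleton 1)
  have hexp :
      (fun ω => Real.exp (t * X ω)) = fun ω => 1 + (Real.exp t - 1) * E.indicator 1 ω := by
    funext ω
    rcases h01 ω with h | h <;> simp [E, h]
  rw [mgf, hexp,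
    integral_add (integrable_const 1) (((integrable_const 1).indicator hE).const_mul _),
    integral_const_mul, integral_indicator_one hE, measureReal_def, hb, ENNReal.toReal_ofReal hp]
  simp

lemma measureReal_sum_ge_le_of_zero_one [Fintype ι] {X : ι → Ω → ℝ}
    (hX : ∀ k, Measurable (X k)) (h01 : ∀ k ω, X k ω = 0 ∨ X k ω = 1) (hind : iIndepFun X P)
    {p : ι → ℝ} (hp : ∀ k, 0 ≤ p k) (hb : ∀ k, P {ω | X k ω = 1} = ENNReal.ofReal (p k))
    {t : ℝ} (ht : 0 ≤ t) (a : ℝ) :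
    P.real {ω | a ≤ ∑ k, X k ω} ≤ Real.exp (-t * a + (Real.exp t - 1) * ∑ k, p k) := by
  have hS : ∀ ω, (∑ k, X k) ω = ∑ k, X k ω := fun ω => Finset.sum_apply ω _ _
  have hbound : ∀ ω, ‖Real.exp (t * (∑ k, X k) ω)‖ ≤ Real.exp (t * Fintype.card ι) := by
    intro ω
    rw [Real.norm_of_nonneg (Real.exp_pos _).le, hS, Real.exp_le_exp]
    refine mul_le_mul_of_nonneg_left ?_ ht
    simpa using Finset.sum_le_sum fun k (_ : k ∈ Finset.univ) => (h01 k ω).elim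
      (fun h => h.le.trans zero_le_one) le_of_eq
  have hint : Integrable (fun ω => Real.exp (t * (∑ k, X k) ω)) P :=
    .of_bound (by fun_prop) _ (ae_of_all _ hbound)
  have hmgf : mgf (∑ k, X k) P t ≤ Real.exp ((Real.exp t - 1) * ∑ k, p k) := by
    rw [hind.mgf_sum hX, Finset.mul_sum, Real.exp_sum]
    refine Finset.prod_le_prod (fun k _ => ?_) (fun k _ => ?_) <;>
      rw [mgf_of_zero_one (hX k) (h01 k) (hp k) (hb k)]
    · nlinarith [Real.add_one_le_exp t, hp k]
    · linarith [Real.add_one_le_exp ((Real.exp t - 1) * p k)]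
  calc P.real {ω | a ≤ ∑ k, X k ω} = P.real {ω | a ≤ (∑ k, X k) ω} := by simp only [hS]
    _ ≤ Real.exp (-t * a) * mgf (∑ k, X k) P t := measure_ge_le_exp_mul_mgf a ht hint
    _ ≤ Real.exp (-t * a) * Real.exp ((Real.exp t - 1) * ∑ k, p k) := by gcongr
    _ = _ := (Real.exp_add _ _).symm

lemma five_le_log_four_mul : 5 ≤ Real.log 4 * (1 + (2 + 2 * Real.sqrt 10) / 3) := by
  have hlog : Real.log 4 = 2 * Real.log 2 := by
    rw [show (4 : ℝ) = 2 ^ 2 by norm_num, Real.log_pow]; push_cast; ring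
  have hsqrt : (3.16 : ℝ) ≤ Real.sqrt 10 :=
    Real.le_sqrt_of_sq_le (by norm_num)
  rw [hlog]
  nlinarith [Real.log_two_gt_d9]

lemma measure_sum_ge_le_exp_neg_two_mul [Fintype ι] {X : ι → Ω → ℝ}
    (hX : ∀ k, Measurable (X k)) (h01 : ∀ k ω, X k ω = 0 ∨ X k ω = 1) (hind : iIndepFun X P)
    {p : ι → ℝ} (hp : ∀ k, 0 ≤ p k) (hb : ∀ k, P {ω | X k ω = 1} = ENNReal.ofReal (p k))
    {M : ℝ} (hM : ∑ k, p k ≤ M) :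
    P {ω | (1 + (2 + 2 * Real.sqrt 10) / 3) * M ≤ ∑ k, X k ω} ≤
      ENNReal.ofReal (Real.exp (-2 * M)) := by
  have hM0 : 0 ≤ M := (Finset.sum_nonneg fun k _ => hp k).trans hM
  have h4 : Real.exp (Real.log 4) = 4 := Real.exp_log (by norm_num)
  rw [← ofReal_measureReal]
  refine ENNReal.ofReal_le_ofReal ((measureReal_sum_ge_le_of_zero_one hX h01 hind hp hb
    (Real.log_nonneg (by norm_num : (1 : ℝ) ≤ 4)) _).trans (Real.exp_le_exp.2 ?_))
  rw [h4]
  nlinarith [mul_le_mul_of_nonneg_right five_le_log_four_mul hM0]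

end Chernoff

lemma one_sub_card_mul_le_measure_forall {Ω ι : Type*} [MeasurableSpace Ω] [Fintype ι]
    {P : Measure Ω} [IsProbabilityMeasure P] {p : ι → Ω → Prop} {δ : ℝ≥0∞}
    (h : ∀ i, P {ω | ¬ p i ω} ≤ δ) :
    1 - Fintype.card ι * δ ≤ P {ω | ∀ i, p i ω} := by
  have hcompl : {ω | ∀ i, p i ω}ᶜ = ⋃ i, {ω | ¬ p i ω} := by
    ext ω; simp
  calc 1 - Fintype.card ι * δ ≤ 1 - P {ω | ∀ i, p i ω}ᶜ := by
        refine tsub_le_tsub_left ?_ 1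
        rw [hcompl]
        refine (measure_iUnion_fintype_le P _).trans ?_
        simpa using Finset.sum_le_sum fun i (_ : i ∈ Finset.univ) => h i
    _ ≤ P {ω | ∀ i, p i ω} := by
        rw [tsub_le_iff_right, ← measure_univ (μ := P)]
        exact measure_univ_le_add_compl _

lemma mul_exp_neg_two_mul_le_inv {x y M : ℝ} (hy : 0 ≤ y) (hyx : y ≤ x)
    (hM : Real.log x ≤ M) : y * Real.exp (-2 * M) ≤ x⁻¹ := by
  rcases (hy.trans hyx).eq_or_lt with rfl | hx
  · simp [le_antisymm hyx hy]
  have hexp : Real.exp (-2 * M) ≤ x⁻¹ * x⁻¹ := by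
    calc Real.exp (-2 * M) ≤ Real.exp (-(Real.log x + Real.log x)) := by
          gcongr; linarith
      _ = x⁻¹ * x⁻¹ := by rw [Real.exp_neg, Real.exp_add, Real.exp_log hx, mul_inv]
  calc y * Real.exp (-2 * M) ≤ x * (x⁻¹ * x⁻¹) := by gcongr
    _ = x⁻¹ := by field_simp

lemma apply_inf_mul_apply_sup {α R : Type*} [LinearOrder α] [CommMagma R] (f : α → R) (i j : α) :
    f (i ⊓ j) * f (i ⊔ j) = f i * f j := by
  rcases le_total i j with h | h
  · rw [inf_eq_left.2 h, sup_eq_right.2 h]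
  · rw [inf_eq_right.2 h, sup_eq_left.2 h, mul_comm]

lemma Matrix.IsSymm.apply_inf_sup {α R : Type*} [LinearOrder α] {M : Matrix α α R}
    (hM : M.IsSymm) (i j : α) : M (i ⊓ j) (i ⊔ j) = M i j := by
  rcases le_total i j with h | h
  · rw [inf_eq_left.2 h, sup_eq_right.2 h]
  · rw [inf_eq_right.2 h, sup_eq_left.2 h, hM.apply]

lemma mul_mul_transpose_apply_mem_Icc {ι κ : Type*} [Fintype κ] {Z : Matrix ι κ ℝ}
    {B : Matrix κ κ ℝ} (hZ0 : ∀ i k, 0 ≤ Z i k) (hZ1 : ∀ i, ∑ k, Z i k = 1)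
    (hB : ∀ a b, 0 ≤ B a b ∧ B a b ≤ 1) (i j : ι) :
    (Z * B * Zᵀ) i j ∈ Set.Icc 0 1 := by
  have happ : (Z * B * Zᵀ) i j = ∑ a, ∑ b, Z i a * B a b * Z j b := by
    simp only [Matrix.mul_apply, Matrix.transpose_apply, Finset.sum_mul]
    exact Finset.sum_comm
  rw [happ]
  constructor
  · exact Finset.sum_nonneg fun a _ => Finset.sum_nonneg fun b _ =>
      mul_nonneg (mul_nonneg (hZ0 i a) (hB a b).1) (hZ0 j b)
  · calc ∑ a, ∑ b, Z i a * B a b * Z j b ≤ ∑ a, ∑ b, Z i a * 1 * Z j b := by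
          gcongr with a _ b _
          · exact hZ0 j b
          · exact hZ0 i a
          · exact (hB a b).2
      _ = 1 := by simp [← Finset.mul_sum, hZ1]

lemma MLDCSBM.OmegaL_mem_Icc {n L K : ℕ} {Z : Matrix (Fin n) (Fin K) ℝ} {θ : Fin n → ℝ}
    {B : Fin L → Matrix (Fin K) (Fin K) ℝ} (h : MLDCSBM Z θ B) (l : Fin L) (i j : Fin n) :
    OmegaL θ Z (B l) i j ∈ Set.Icc 0 (θ i * θ j) := by
  obtain ⟨⟨hZ01, hZ1, -⟩, hθ, hB⟩ := h
  have hZ0 : ∀ i k, 0 ≤ Z i k := fun i k => (hZ01 i k).elim ge_of_eq (fun h => h ▸ zero_le_one)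
  obtain ⟨hQ0, hQ1⟩ := mul_mul_transpose_apply_mem_Icc hZ0 hZ1 (hB l).2 i j
  have hent : OmegaL θ Z (B l) i j = θ i * (Z * B l * Zᵀ) i j * θ j := by
    simp only [OmegaL, Matrix.mul_assoc, Matrix.diagonal_mul, Matrix.mul_diagonal]
  rw [hent]
  have hθi := (hθ i).1.le
  have hθj := (hθ j).1.le
  constructor
  · positivity
  · nlinarith [mul_nonneg hθi hθj]

lemma le_thetaMax {n : ℕ} (θ : Fin n → ℝ) (i : Fin n) : θ i ≤ thetaMax θ :=
  le_csSup (Set.finite_range θ).bddAbove ⟨i, rfl⟩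

lemma iIndepFun.precomp_inf_sup {Ω ι α : Type*} [MeasurableSpace Ω] {P : Measure Ω}
    [LinearOrder α] {A : ι → Ω → α → α → ℝ}
    (h : iIndepFun (fun (p : {q : ι × α × α // q.2.1 ≤ q.2.2}) ω => A p.1.1 ω p.1.2.1 p.1.2.2) P)
    (i : α) : iIndepFun (fun (q : ι × α) ω => A q.1 ω (i ⊓ q.2) (i ⊔ q.2)) P := by
  refine h.precomp (g := fun q : ι × α => ⟨(q.1, i ⊓ q.2, i ⊔ q.2), inf_le_sup⟩) ?_
  rintro ⟨l, j⟩ ⟨l', j'⟩ hq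
  simp only [Subtype.mk.injEq, Prod.mk.injEq] at hq
  obtain ⟨rfl, hinf, hsup⟩ := hq
  rw [inf_comm i, inf_comm i] at hinf
  rw [sup_comm i, sup_comm i] at hsup
  exact congrArg _ (eq_of_inf_eq_sup_eq hinf hsup)

lemma MLDCSBM.sum_OmegaL_inf_sup_le {n L K : ℕ} {Z : Matrix (Fin n) (Fin K) ℝ} {θ : Fin n → ℝ}
    {B : Fin L → Matrix (Fin K) (Fin K) ℝ} (h : MLDCSBM Z θ B) (i : Fin n) :
    ∑ q : Fin L × Fin n, OmegaL θ Z (B q.1) (i ⊓ q.2) (i ⊔ q.2) ≤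
      thetaMax θ * (∑ j, θ j) * L := by
  calc ∑ q : Fin L × Fin n, OmegaL θ Z (B q.1) (i ⊓ q.2) (i ⊔ q.2)
      ≤ ∑ q : Fin L × Fin n, thetaMax θ * θ q.2 := by
        gcongr with q
        calc OmegaL θ Z (B q.1) (i ⊓ q.2) (i ⊔ q.2) ≤ θ (i ⊓ q.2) * θ (i ⊔ q.2) :=
              (h.OmegaL_mem_Icc _ _ _).2
          _ = θ i * θ q.2 := apply_inf_mul_apply_sup θ i q.2
          _ ≤ thetaMax θ * θ q.2 := by
              gcongr
              · exact (h.2.1 q.2).1.le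
              · exact le_thetaMax θ i
    _ = thetaMax θ * (∑ j, θ j) * L := by
        simp only [Fintype.sum_prod_type, ← Finset.mul_sum, Finset.sum_const, Finset.card_univ,
          Fintype.card_fin, nsmul_eq_mul]
        ring

theorem stmt8_general {n L K : ℕ}
    (Z : Matrix (Fin n) (Fin K) ℝ) (θ : Fin n → ℝ)
    (B : Fin L → Matrix (Fin K) (Fin K) ℝ)
    (hmodel : MLDCSBM Z θ B)
    {Ωs : Type} [MeasurableSpace Ωs] (P : Measure Ωs) [IsProbabilityMeasure P]
    (A : Fin L → Ωs → Matrix (Fin n) (Fin n) ℝ)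
    (hmeas : ∀ l i j, Measurable fun ω => A l ω i j)
    (hsymm : ∀ l ω, (A l ω).IsSymm)
    (h01 : ∀ l ω i j, A l ω i j = 0 ∨ A l ω i j = 1)
    (hbern : ∀ l i j, P {ω | A l ω i j = 1} = ENNReal.ofReal (OmegaL θ Z (B l) i j))
    (hindep : iIndepFun
      (fun (p : {q : Fin L × Fin n × Fin n // q.2.1 ≤ q.2.2}) ω =>
        A p.1.1 ω p.1.2.1 p.1.2.2) P)
    (hsparse : Real.log (n + L) ≤ thetaMax θ * (∑ i, θ i) * L) :
    ENNReal.ofReal (1 - 1 / (n + L)) ≤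
      P {ω | ∀ i, (∑ l, ∑ j, A l ω i j) ≤
        (1 + (2 + 2 * Real.sqrt 10) / 3) * (thetaMax θ * (∑ i', θ i') * L)} := by
  set M := thetaMax θ * (∑ i', θ i') * L
  have hrow : ∀ i, P {ω | ¬ (∑ l, ∑ j, A l ω i j) ≤ (1 + (2 + 2 * Real.sqrt 10) / 3) * M} ≤
      ENNReal.ofReal (Real.exp (-2 * M)) := by
    intro i
    have hdeg : ∀ ω, ∑ l, ∑ j, A l ω i j = ∑ q : Fin L × Fin n, A q.1 ω (i ⊓ q.2) (i ⊔ q.2) :=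
      fun ω => by simp only [(hsymm _ ω).apply_inf_sup, Fintype.sum_prod_type]
    refine (measure_mono fun ω (hω : ¬ _ ≤ _) => ?_).trans
      (measure_sum_ge_le_exp_neg_two_mul (fun _ => hmeas _ _ _) (fun _ _ => h01 _ _ _ _)
        (iIndepFun.precomp_inf_sup hindep i) (fun _ => (hmodel.OmegaL_mem_Icc _ _ _).1)
        (fun _ => hbern _ _ _) (hmodel.sum_OmegaL_inf_sup_le i))
    exact (hdeg ω ▸ not_le.1 hω).le
  have hfail :
      (n : ℝ≥0∞) * ENNReal.ofReal (Real.exp (-2 * M)) ≤ ENNReal.ofReal (1 / (n + L)) := by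
    rw [← ENNReal.ofReal_natCast, ← ENNReal.ofReal_mul (Nat.cast_nonneg n), one_div]
    exact ENNReal.ofReal_le_ofReal (mul_exp_neg_two_mul_le_inv (Nat.cast_nonneg n)
      (le_add_of_nonneg_right (Nat.cast_nonneg L)) hsparse)
  calc ENNReal.ofReal (1 - 1 / (n + L)) = 1 - ENNReal.ofReal (1 / (n + L)) := by
        rw [ENNReal.ofReal_sub _ (by positivity), ENNReal.ofReal_one]
    _ ≤ 1 - n * ENNReal.ofReal (Real.exp (-2 * M)) := tsub_le_tsub_left hfail 1
    _ ≤ _ := by simpa using one_sub_card_mul_le_measure_forall hrow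

theorem stmt8 {n L K : ℕ} (hn : 0 < n) (hL : 0 < L) (hK : 0 < K) (hKn : K ≤ n)
    (Z : Matrix (Fin n) (Fin K) ℝ) (θ : Fin n → ℝ)
    (B : Fin L → Matrix (Fin K) (Fin K) ℝ)
    (hmodel : MLDCSBM Z θ B)
    {Ωs : Type} [MeasurableSpace Ωs] (P : Measure Ωs) [IsProbabilityMeasure P]
    (A : Fin L → Ωs → Matrix (Fin n) (Fin n) ℝ)
    (hmeas : ∀ l i j, Measurable fun ω => A l ω i j)
    (hsymm : ∀ l ω, (A l ω).IsSymm)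
    (h01 : ∀ l ω i j, A l ω i j = 0 ∨ A l ω i j = 1)
    (hbern : ∀ l i j, P {ω | A l ω i j = 1} = ENNReal.ofReal (OmegaL θ Z (B l) i j))
    (hindep : iIndepFun
      (fun (p : {q : Fin L × Fin n × Fin n // q.2.1 ≤ q.2.2}) ω =>
        A p.1.1 ω p.1.2.1 p.1.2.2) P)
    (hsparse : Real.log (n + L) ≤ thetaMax θ * (∑ i, θ i) * L) :
    ENNReal.ofReal (1 - 1 / (n + L)) ≤
      P {ω | ∀ i, (∑ l, ∑ j, A l ω i j) ≤
        (1 + (2 + 2 * Real.sqrt 10) / 3) * (thetaMax θ * (∑ i', θ i') * L)} :=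
  stmt8_general Z θ B hmodel P A hmeas hsymm h01 hbern hindep hsparse
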